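/- Let A be an M×M complex matrix all of whose eigenvalues have negative real part, and let τ > 0. Then the matrix 2A − τ·1 is invertible (where 1 is the identity matrix), and the matrix Laguerre coefficients S_{n,τ,0,A} = ∫₀^∞ exp(tA) · l_{n,τ}(t) dt satisfy the recursion S_{0,τ,0,A} = −2√τ · (2A − τ·1)⁻¹ and S_{n+1,τ,0,A} = (2A + τ·1)·(2A − τ·1)⁻¹ · S_{n,τ,0,A} for all n ∈ ℕ. -/

import Mathlib

open MeasureTheory

/-- The (ordinary) Laguerre polynomial `L_n(t) = ∑_{k=0}^n (-1)^k (n!/((k!)²(n-k)!)) t^k`. -/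
noncomputable def ordLagPoly (n : ℕ) (t : ℝ) : ℝ :=
  ∑ k ∈ Finset.range (n + 1),
    (-1 : ℝ) ^ k * ((n.factorial : ℝ) / ((k.factorial : ℝ) ^ 2 * (n - k).factorial)) * t ^ k

/-- The Laguerre function `l_{n,τ}(t) = √τ e^{-τt/2} L_n(τt)`. -/
noncomputable def ordLagFun (τ : ℝ) (n : ℕ) (t : ℝ) : ℝ :=
  Real.sqrt τ * Real.exp (-τ * t / 2) * ordLagPoly n (τ * t)

/-- The Laguerre coefficient `s_{n,τ,0,λ} = ∫₀^∞ e^{λ t} l_{n,τ}(t) dt`. -/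
noncomputable def ordLagCoef (τ : ℝ) (n : ℕ) (z : ℂ) : ℂ :=
  ∫ t in Set.Ioi (0 : ℝ), Complex.exp (z * t) * (ordLagFun τ n t : ℂ)

/-- The matrix Laguerre coefficient `S_{n,τ,0,A} = ∫₀^∞ exp(tA) l_{n,τ}(t) dt`
(entrywise integral). -/
noncomputable def matOrdLagCoef (τ : ℝ) (n : ℕ) {M : ℕ} (A : Matrix (Fin M) (Fin M) ℂ) :
    Matrix (Fin M) (Fin M) ℂ :=
  Matrix.of fun i j =>
    ∫ t in Set.Ioi (0 : ℝ), (NormedSpace.exp ((t : ℂ) • A)) i j * (ordLagFun τ n t : ℂ)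

/-!
Write `S_p = ∫₀^∞ exp(tA) √τ e^{-τt/2} p(τt) dt` for a real polynomial `p`, so that
`S_{n,τ,0,A} = S_{L_n}`. Integrating `d/dt (exp(tA) √τ e^{-τt/2} p(τt))` over `(0, ∞)` gives
`(2A - τ) S_p = -2√τ p(0) - 2τ S_{p'}`. The Laguerre polynomials satisfy `L_0' = 0` and
`L_{n+1}' = L_n' - L_n` (Pascal's rule on the coefficients), which turns this identity into
`(2A - τ) S_{L_0} = -2√τ` and `(2A - τ) S_{L_{n+1}} = (2A + τ) S_{L_n}`. Finally `2A - τ` is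
invertible because `τ/2`, having positive real part, is not an eigenvalue.

All integrals converge because `exp(tA)` is bounded for `t ≥ 0`. By Cayley–Hamilton,
`∏ (A - μ) = 0` over the eigenvalues `μ`, and boundedness of `exp(tA) Q` is propagated from
`(A - μ) Q` to `Q` by variation of constants,
`exp(tA) Q = e^{μt} Q + ∫₀^t e^{μ(t-s)} exp(sA) (A - μ) Q ds`, using `Re μ < 0`.
-/

open Polynomial Filter Topology

section Laguerre

open Nat

noncomputable def laguerre (n : ℕ) : ℝ[X] :=
  ∑ k ∈ Finset.range (n + 1), C ((-1 : ℝ) ^ k * n.choose k / k !) * X ^ k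

theorem coeff_laguerre (n k : ℕ) : (laguerre n).coeff k = (-1) ^ k * n.choose k / k ! := by
  simp only [laguerre, finsetSum_coeff, coeff_C_mul_X_pow, Finset.sum_ite_eq, Finset.mem_range]
  split_ifs with hk
  · rfl
  · simp [Nat.choose_eq_zero_of_lt (by omega : n < k)]

theorem ordLagPoly_eq_eval_laguerre (n : ℕ) (t : ℝ) : ordLagPoly n t = (laguerre n).eval t := by
  simp only [ordLagPoly, laguerre, eval_finsetSum, eval_mul, eval_C, eval_pow, eval_X]
  refine Finset.sum_congr rfl fun k hk => ?_
  rw [Nat.cast_choose ℝ (Finset.mem_range_succ_iff.mp hk)]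
  field_simp

theorem eval_zero_laguerre (n : ℕ) : (laguerre n).eval 0 = 1 := by
  simp [← coeff_zero_eq_eval_zero, coeff_laguerre]

theorem derivative_laguerre_zero : derivative (laguerre 0) = 0 := by
  simp [laguerre]

theorem derivative_laguerre_succ (n : ℕ) :
    derivative (laguerre (n + 1)) = derivative (laguerre n) - laguerre n := by
  ext k
  simp only [coeff_derivative, coeff_sub, coeff_laguerre, Nat.choose_succ_succ',
    Nat.factorial_succ]
  push_cast
  field_simp
  ring

end Laguerre

section ExpPolyFun

noncomputable def expPolyFun (τ : ℝ) (p : ℝ[X]) (t : ℝ) : ℝ :=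
  √τ * Real.exp (-τ * t / 2) * p.eval (τ * t)

variable (τ : ℝ)

theorem ordLagFun_eq_expPolyFun (n : ℕ) : ordLagFun τ n = expPolyFun τ (laguerre n) := by
  ext t
  rw [ordLagFun, ordLagPoly_eq_eval_laguerre, expPolyFun]

theorem expPolyFun_sub (p q : ℝ[X]) :
    expPolyFun τ (p - q) = expPolyFun τ p - expPolyFun τ q := by
  ext t
  simp only [expPolyFun, eval_sub, Pi.sub_apply]
  ring

theorem expPolyFun_apply_zero (p : ℝ[X]) : expPolyFun τ p 0 = √τ * p.eval 0 := by
  simp [expPolyFun]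

theorem hasDerivAt_expPolyFun (p : ℝ[X]) (t : ℝ) :
    HasDerivAt (expPolyFun τ p)
      (-(τ / 2) * expPolyFun τ p t + τ * expPolyFun τ (derivative p) t) t := by
  have hexp : HasDerivAt (fun t => Real.exp (-τ * t / 2))
      (Real.exp (-τ * t / 2) * (-τ / 2)) t := by
    simpa using ((hasDerivAt_id t).const_mul (-τ)).div_const 2 |>.exp
  have hpoly : HasDerivAt (fun t => p.eval (τ * t)) ((derivative p).eval (τ * t) * τ) t :=
    (p.hasDerivAt (τ * t)).comp t (by simpa using (hasDerivAt_id t).const_mul τ)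
  exact ((hexp.const_mul √τ).mul hpoly).congr_deriv (by simp only [expPolyFun]; ring)

variable {τ}

theorem isLittleO_expPolyFun (hτ : 0 < τ) (p : ℝ[X]) :
    expPolyFun τ p =o[atTop] fun t => Real.exp (-(τ / 4) * t) := by
  have hpow : (fun x : ℝ => x ^ p.natDegree) =o[atTop] fun x => Real.exp (1 / 4 * x) :=
    isLittleO_pow_exp_pos_mul_atTop p.natDegree (by norm_num)
  have hpoly : (fun x => p.eval x) =o[atTop] fun x => Real.exp (1 / 4 * x) :=
    (isBigO_atTop_of_degree_le p (X ^ p.natDegree) (by simp [degree_le_natDegree]))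
      |>.trans_isLittleO (by simpa using hpow)
  have hprod := ((hpoly.comp_tendsto (tendsto_id.const_mul_atTop hτ)).const_mul_left √τ)
    |>.mul_isBigO (Asymptotics.isBigO_refl (fun t => Real.exp (-τ * t / 2)) atTop)
  refine (hprod.congr_left fun t => ?_).congr_right fun t => ?_
  · simp only [expPolyFun, Function.comp, id]
    ring
  · simp only [Function.comp, id, ← Real.exp_add]
    ring_nf

theorem integrableOn_expPolyFun (hτ : 0 < τ) (p : ℝ[X]) :
    IntegrableOn (expPolyFun τ p) (Set.Ioi 0) :=
  integrable_of_isBigO_exp_neg (by positivity)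
    (continuous_iff_continuousAt.2 fun t =>
      (hasDerivAt_expPolyFun τ p t).continuousAt).continuousOn
    (isLittleO_expPolyFun hτ p).isBigO

theorem tendsto_expPolyFun (hτ : 0 < τ) (p : ℝ[X]) : Tendsto (expPolyFun τ p) atTop (𝓝 0) :=
  (isLittleO_expPolyFun hτ p).trans_tendsto <|
    Real.tendsto_exp_atBot.comp (tendsto_id.const_mul_atTop_of_neg (by linarith))

end ExpPolyFun

theorem integral_exp_mul_sub_le {c : ℝ} (hc : c < 0) (t : ℝ) :
    ∫ s in (0 : ℝ)..t, Real.exp (c * (t - s)) ≤ 1 / -c := by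
  have hint : ∫ s in (0 : ℝ)..t, Real.exp (c * (t - s)) = (1 - Real.exp (c * t)) / -c := by
    simp_rw [mul_sub]
    rw [intervalIntegral.integral_comp_sub_mul (f := Real.exp) hc.ne, integral_exp, sub_self, Real.exp_zero, smul_eq_mul, mul_zero, sub_zero, div_neg, ← neg_div, neg_sub,
      inv_mul_eq_div]
  rw [hint]
  exact div_le_div_of_nonneg_right (by linarith [Real.exp_pos (c * t)]) (by linarith)

section BanachAlgebra

open NormedSpace

variable {𝔸 : Type*} [NormedRing 𝔸] [NormedAlgebra ℂ 𝔸] [CompleteSpace 𝔸]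

theorem hasDerivAt_exp_ofReal_smul (a : 𝔸) (t : ℝ) :
    HasDerivAt (fun s : ℝ => exp ((s : ℂ) • a)) (exp ((t : ℂ) • a) * a) t := by
  simpa [Function.comp_def] using
    (hasDerivAt_exp_smul_const a (t : ℂ)).scomp t Complex.ofRealCLM.hasDerivAt

theorem continuous_exp_ofReal_smul (a : 𝔸) : Continuous fun s : ℝ => exp ((s : ℂ) • a) :=
  continuous_iff_continuousAt.2 fun t => (hasDerivAt_exp_ofReal_smul a t).continuousAt

theorem exp_ofReal_smul_mul_eq (a Q : 𝔸) (μ : ℂ) (t : ℝ) :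
    exp ((t : ℂ) • a) * Q = Complex.exp (μ * t) • Q +
      ∫ s in (0 : ℝ)..t,
        Complex.exp (μ * (t - s)) • (exp ((s : ℂ) • a) * ((a - algebraMap ℂ 𝔸 μ) * Q)) := by
  have hderiv : ∀ s : ℝ,
      HasDerivAt (fun s : ℝ => Complex.exp (μ * (t - s)) • (exp ((s : ℂ) • a) * Q))
      (Complex.exp (μ * (t - s)) • (exp ((s : ℂ) • a) * ((a - algebraMap ℂ 𝔸 μ) * Q))) s := by
    intro s
    have hscalar : HasDerivAt (fun s : ℝ => Complex.exp (μ * (t - s)))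
        (Complex.exp (μ * (t - s)) * -μ) s := by
      have hcomplex := ((hasDerivAt_id (s : ℂ)).const_sub (t : ℂ)).const_mul μ |>.cexp
      simpa using hcomplex.comp_ofReal
    refine (hscalar.smul ((hasDerivAt_exp_ofReal_smul a s).mul_const Q)).congr_deriv ?_
    simp only [Algebra.algebraMap_eq_smul_one, sub_mul, smul_mul_assoc, one_mul, mul_sub,
      mul_smul_comm, mul_assoc]
    module
  have hcont : Continuous fun s : ℝ =>
      Complex.exp (μ * (t - s)) • (exp ((s : ℂ) • a) * ((a - algebraMap ℂ 𝔸 μ) * Q)) := by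
    have hexp := continuous_exp_ofReal_smul a
    fun_prop
  rw [intervalIntegral.integral_eq_sub_of_hasDerivAt (fun s _ => hderiv s)
    (hcont.intervalIntegrable _ _)]
  simp

theorem norm_exp_ofReal_smul_mul_le (a Q : 𝔸) {μ : ℂ} (hμ : μ.re < 0) {C : ℝ}
    (hC : ∀ s : ℝ, 0 ≤ s → ‖exp ((s : ℂ) • a) * ((a - algebraMap ℂ 𝔸 μ) * Q)‖ ≤ C)
    {t : ℝ} (ht : 0 ≤ t) :
    ‖exp ((t : ℂ) • a) * Q‖ ≤ ‖Q‖ + C / -μ.re := by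
  have hC0 : 0 ≤ C := (norm_nonneg _).trans (hC 0 le_rfl)
  have hnorm : ∀ r : ℝ, ‖Complex.exp (μ * r)‖ = Real.exp (μ.re * r) := fun r => by
    simp [Complex.norm_exp]
  have hfirst : ‖Complex.exp (μ * t) • Q‖ ≤ ‖Q‖ := by
    rw [norm_smul, hnorm]
    exact mul_le_of_le_one_left (norm_nonneg _) (Real.exp_le_one_iff.2 (by nlinarith))
  have hsecond : ‖∫ s in (0 : ℝ)..t,
      Complex.exp (μ * (t - s)) • (exp ((s : ℂ) • a) * ((a - algebraMap ℂ 𝔸 μ) * Q))‖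
      ≤ C / -μ.re := by
    calc _ ≤ ∫ s in (0 : ℝ)..t, C * Real.exp (μ.re * (t - s)) := by
          refine intervalIntegral.norm_integral_le_of_norm_le ht
            (ae_of_all _ fun s hs => ?_) (Continuous.intervalIntegrable (by fun_prop) _ _)
          rw [norm_smul, ← Complex.ofReal_sub, hnorm, mul_comm]
          exact mul_le_mul_of_nonneg_right (hC s hs.1.le) (Real.exp_pos _).le
      _ ≤ C * (1 / -μ.re) := by
          rw [intervalIntegral.integral_const_mul]
          exact mul_le_mul_of_nonneg_left (integral_exp_mul_sub_le hμ t) hC0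
      _ = C / -μ.re := by ring
  rw [exp_ofReal_smul_mul_eq a Q μ t]
  exact (norm_add_le _ _).trans (add_le_add hfirst hsecond)

theorem exists_norm_exp_ofReal_smul_mul_le (a : 𝔸) {s : Multiset ℂ} (hs : ∀ μ ∈ s, μ.re < 0)
    {Q : 𝔸} (hQ : aeval a (s.map fun μ => X - C μ).prod * Q = 0) :
    ∃ C, ∀ t : ℝ, 0 ≤ t → ‖exp ((t : ℂ) • a) * Q‖ ≤ C := by
  induction s using Multiset.induction_on generalizing Q with
  | empty =>
    refine ⟨0, fun t _ => ?_⟩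
    simp_all
  | cons μ s ih =>
    have hQ' : aeval a (s.map fun μ => X - C μ).prod * ((a - algebraMap ℂ 𝔸 μ) * Q) = 0 := by
      rw [← hQ, Multiset.map_cons, Multiset.prod_cons, mul_comm, map_mul, mul_assoc]
      simp
    obtain ⟨C, hC⟩ := ih (fun ν hν => hs ν (Multiset.mem_cons_of_mem hν)) hQ'
    exact ⟨‖Q‖ + C / -μ.re, fun t ht =>
      norm_exp_ofReal_smul_mul_le a Q (hs μ (Multiset.mem_cons_self μ s)) hC ht⟩

theorem exists_norm_exp_ofReal_smul_le (a : 𝔸) {p : ℂ[X]} (hp : p.Monic)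
    (hroots : ∀ μ ∈ p.roots, μ.re < 0) (ha : aeval a p = 0) :
    ∃ C, ∀ t : ℝ, 0 ≤ t → ‖exp ((t : ℂ) • a)‖ ≤ C := by
  rw [(IsAlgClosed.splits p).eq_prod_roots_of_monic hp, ← mul_one (aeval a _)] at ha
  simpa using exists_norm_exp_ofReal_smul_mul_le a hroots ha

end BanachAlgebra

theorem isUnit_two_smul_sub_smul_one {R : Type*} [Ring R] [Algebra ℂ R] {a : R}
    (ha : ∀ μ ∈ spectrum ℂ a, μ.re < 0) {τ : ℝ} (hτ : 0 < τ) :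
    IsUnit ((2 : ℂ) • a - (τ : ℂ) • (1 : R)) := by
  have hnotin : ((τ / 2 : ℝ) : ℂ) ∉ spectrum ℂ a := fun h => by
    linarith [ha _ h, Complex.ofReal_re (τ / 2)]
  have heq : (2 : ℂ) • a - (τ : ℂ) • (1 : R) =
      algebraMap ℂ R (-2) * (algebraMap ℂ R ((τ / 2 : ℝ) : ℂ) - a) := by
    simp only [Algebra.algebraMap_eq_smul_one, smul_mul_assoc, one_mul, mul_sub, smul_smul]
    push_cast
    module
  rw [heq]
  exact ((isUnit_iff_ne_zero.2 (by norm_num)).map _).mul (spectrum.notMem_iff.1 hnotin)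

namespace Matrix

open NormedSpace

variable {n : Type*} [Fintype n]

open scoped Matrix.Norms.Operator in
theorem norm_apply_le_linfty_opNorm {m α : Type*} [Fintype m] [SeminormedAddCommGroup α]
    (B : Matrix m n α) (i : m) (j : n) : ‖B i j‖ ≤ ‖B‖ := by
  rw [linfty_opNorm_def, ← coe_nnnorm, NNReal.coe_le_coe]
  exact (Finset.single_le_sum (fun _ _ => zero_le) (Finset.mem_univ j)).trans
    (Finset.le_sup (f := fun i => ∑ j, ‖B i j‖₊) (Finset.mem_univ i))

variable [DecidableEq n]

theorem exists_norm_exp_ofReal_smul_apply_le {A : Matrix n n ℂ}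
    (hA : ∀ μ ∈ spectrum ℂ A, μ.re < 0) :
    ∃ C, ∀ t : ℝ, 0 ≤ t → ∀ i j, ‖exp ((t : ℂ) • A) i j‖ ≤ C := by
  -- `exp` only depends on the topology, which the operator norm induces
  let _ := Matrix.linftyOpNormedRing (n := n) (α := ℂ)
  let _ := Matrix.linftyOpNormedAlgebra (n := n) (R := ℂ) (α := ℂ)
  obtain ⟨C, hC⟩ := exists_norm_exp_ofReal_smul_le A A.charpoly_monic
    (fun μ hμ => hA μ (mem_spectrum_iff_isRoot_charpoly.2 (isRoot_of_mem_roots hμ)))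
    (aeval_self_charpoly A)
  exact ⟨C, fun t ht i j => (norm_apply_le_linfty_opNorm _ i j).trans (hC t ht)⟩

theorem hasDerivAt_exp_ofReal_smul_apply (A : Matrix n n ℂ) (t : ℝ) (i j : n) :
    HasDerivAt (fun s : ℝ => exp ((s : ℂ) • A) i j) ((A * exp ((t : ℂ) • A)) i j) t := by
  let _ := Matrix.linftyOpNormedRing (n := n) (α := ℂ)
  let _ := Matrix.linftyOpNormedAlgebra (n := n) (R := ℂ) (α := ℂ)
  rw [← ((Commute.refl A).smul_left (t : ℂ)).exp_left.eq]
  exact ((LinearMap.toContinuousLinearMap (entryLinearMap ℂ ℂ i j)).restrictScalars ℝ)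
    |>.hasFDerivAt.comp_hasDerivAt t (hasDerivAt_exp_ofReal_smul A t)

theorem continuous_exp_ofReal_smul_apply (A : Matrix n n ℂ) (i j : n) :
    Continuous fun s : ℝ => exp ((s : ℂ) • A) i j :=
  continuous_iff_continuousAt.2 fun t => (hasDerivAt_exp_ofReal_smul_apply A t i j).continuousAt

theorem eq_smul_inv_of_mul_eq {α : Type*} [CommRing α] {X T : Matrix n n α} {c : α}
    (hX : IsUnit X) (h : X * T = c • 1) : T = c • X⁻¹ := by
  rw [← nonsing_inv_mul_cancel_left X T ((isUnit_iff_isUnit_det X).1 hX), h, mul_smul_comm,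
    mul_one]

theorem eq_mul_inv_mul_of_mul_eq {α : Type*} [CommRing α] {X Y S T : Matrix n n α}
    (hX : IsUnit X) (hXY : Commute X Y) (h : X * T = Y * S) : T = Y * X⁻¹ * S := by
  obtain ⟨u, rfl⟩ := hX
  rw [← coe_units_inv, ← (hXY.units_inv_left).eq, mul_assoc, ← h, ← mul_assoc, u.inv_mul,
    one_mul]

noncomputable def expIntegral (A : Matrix n n ℂ) (φ : ℝ → ℝ) : Matrix n n ℂ :=
  of fun i j => ∫ t in Set.Ioi (0 : ℝ), exp ((t : ℂ) • A) i j * (φ t : ℂ)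

theorem expIntegral_smul (A : Matrix n n ℂ) (c : ℝ) (φ : ℝ → ℝ) :
    expIntegral A (c • φ) = (c : ℂ) • expIntegral A φ := by
  ext i j
  simp only [expIntegral, of_apply, smul_apply, Pi.smul_apply, smul_eq_mul, Complex.ofReal_mul,
    ← integral_const_mul]
  exact integral_congr_ae (ae_of_all _ fun t => by ring)

variable {A : Matrix n n ℂ}

theorem integrableOn_exp_ofReal_smul_apply_mul (hA : ∀ μ ∈ spectrum ℂ A, μ.re < 0)
    {φ : ℝ → ℝ} (hφ : IntegrableOn φ (Set.Ioi 0)) (i j : n) :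
    IntegrableOn (fun t : ℝ => exp ((t : ℂ) • A) i j * (φ t : ℂ)) (Set.Ioi 0) := by
  obtain ⟨C, hC⟩ := exists_norm_exp_ofReal_smul_apply_le hA
  exact hφ.ofReal.bdd_mul (continuous_exp_ofReal_smul_apply A i j).aestronglyMeasurable
    (ae_restrict_of_forall_mem measurableSet_Ioi fun t ht => hC t (le_of_lt ht) i j)

theorem expIntegral_add (hA : ∀ μ ∈ spectrum ℂ A, μ.re < 0) {φ ψ : ℝ → ℝ}
    (hφ : IntegrableOn φ (Set.Ioi 0)) (hψ : IntegrableOn ψ (Set.Ioi 0)) :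
    expIntegral A (φ + ψ) = expIntegral A φ + expIntegral A ψ := by
  ext i j
  simp only [expIntegral, of_apply, add_apply, Pi.add_apply, Complex.ofReal_add, mul_add]
  exact integral_add (integrableOn_exp_ofReal_smul_apply_mul hA hφ i j)
    (integrableOn_exp_ofReal_smul_apply_mul hA hψ i j)

theorem expIntegral_sub (hA : ∀ μ ∈ spectrum ℂ A, μ.re < 0) {φ ψ : ℝ → ℝ}
    (hφ : IntegrableOn φ (Set.Ioi 0)) (hψ : IntegrableOn ψ (Set.Ioi 0)) :
    expIntegral A (φ - ψ) = expIntegral A φ - expIntegral A ψ := by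
  ext i j
  simp only [expIntegral, of_apply, sub_apply, Pi.sub_apply, Complex.ofReal_sub, mul_sub]
  exact integral_sub (integrableOn_exp_ofReal_smul_apply_mul hA hφ i j)
    (integrableOn_exp_ofReal_smul_apply_mul hA hψ i j)

theorem mul_expIntegral_add_expIntegral_deriv (hA : ∀ μ ∈ spectrum ℂ A, μ.re < 0)
    {φ φ' : ℝ → ℝ} (hderiv : ∀ t, HasDerivAt φ (φ' t) t) (hφ : IntegrableOn φ (Set.Ioi 0))
    (hφ' : IntegrableOn φ' (Set.Ioi 0)) (hlim : Tendsto φ atTop (𝓝 0)) :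
    A * expIntegral A φ + expIntegral A φ' = -(φ 0 : ℂ) • 1 := by
  ext i j
  obtain ⟨C, hC⟩ := exists_norm_exp_ofReal_smul_apply_le hA
  have hint := fun k => integrableOn_exp_ofReal_smul_apply_mul hA hφ k j
  have hint' := integrableOn_exp_ofReal_smul_apply_mul hA hφ' i j
  have hrow : ∀ t : ℝ, (A * exp ((t : ℂ) • A)) i j * (φ t : ℂ) =
      ∑ k, A i k * (exp ((t : ℂ) • A) k j * (φ t : ℂ)) := fun t => by
    rw [mul_apply, Finset.sum_mul]
    exact Finset.sum_congr rfl fun k _ => mul_assoc _ _ _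
  have hrow_int : IntegrableOn (fun t : ℝ => (A * exp ((t : ℂ) • A)) i j * (φ t : ℂ))
      (Set.Ioi 0) := by
    simp_rw [hrow]
    exact integrable_finsetSum _ fun k _ => (hint k).const_mul (A i k)
  have hbdd : IsBoundedUnder (· ≤ ·) atTop fun t : ℝ => ‖exp ((t : ℂ) • A) i j‖ :=
    ⟨C, eventually_map.2 (eventually_ge_atTop 0 |>.mono fun t ht => hC t ht i j)⟩
  have hftc := integral_Ioi_of_hasDerivAt_of_tendsto' (a := 0)
    (fun t _ => (hasDerivAt_exp_ofReal_smul_apply A t i j).mul (hderiv t).ofReal_comp)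
    (hrow_int.add hint')
    (isBoundedUnder_le_mul_tendsto_zero hbdd (Complex.continuous_ofReal.tendsto' 0 0
      Complex.ofReal_zero |>.comp hlim))
  simp only [add_apply, mul_apply, expIntegral, of_apply, smul_apply, smul_eq_mul]
  simp_rw [← integral_const_mul, ← integral_finsetSum _ fun k _ => (hint k).const_mul (A i k),
    ← integral_add (integrable_finsetSum _ fun k _ => (hint k).const_mul (A i k)) hint', ← hrow,
    hftc]
  simp [mul_comm]

theorem two_smul_sub_mul_expIntegral_expPolyFun (hA : ∀ μ ∈ spectrum ℂ A, μ.re < 0) {τ : ℝ}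
    (hτ : 0 < τ) (p : ℝ[X]) :
    ((2 : ℂ) • A - (τ : ℂ) • 1) * expIntegral A (expPolyFun τ p) =
      (-2 * √τ * p.eval 0 : ℂ) • 1 -
        (2 * τ : ℂ) • expIntegral A (expPolyFun τ (derivative p)) := by
  have hφ := integrableOn_expPolyFun hτ p
  have hψ := integrableOn_expPolyFun hτ (derivative p)
  have hderiv : ∀ t, HasDerivAt (expPolyFun τ p)
      (((-(τ / 2)) • expPolyFun τ p + τ • expPolyFun τ (derivative p)) t) t :=
    hasDerivAt_expPolyFun τ p
  have h := mul_expIntegral_add_expIntegral_deriv hA hderiv hφ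
    ((hφ.smul (-(τ / 2))).add (hψ.smul τ)) (tendsto_expPolyFun hτ p)
  rw [expIntegral_add hA (hφ.smul _) (hψ.smul _), expIntegral_smul, expIntegral_smul,
    expPolyFun_apply_zero, ← eq_sub_iff_add_eq] at h
  rw [sub_mul, smul_mul_assoc, smul_mul_assoc, one_mul, h]
  push_cast
  module

end Matrix

section Recursion

variable {M : ℕ} {A : Matrix (Fin M) (Fin M) ℂ} {τ : ℝ}

theorem matOrdLagCoef_eq_expIntegral (k : ℕ) :
    matOrdLagCoef τ k A = A.expIntegral (expPolyFun τ (laguerre k)) := by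
  rw [← ordLagFun_eq_expPolyFun]
  rfl

theorem two_smul_sub_mul_matOrdLagCoef_zero (hA : ∀ μ ∈ spectrum ℂ A, μ.re < 0) (hτ : 0 < τ) :
    ((2 : ℂ) • A - (τ : ℂ) • 1) * matOrdLagCoef τ 0 A = (-2 * (√τ : ℂ)) • 1 := by
  have hzero : A.expIntegral (expPolyFun τ 0) = 0 := by
    ext
    simp [Matrix.expIntegral, expPolyFun]
  rw [matOrdLagCoef_eq_expIntegral, A.two_smul_sub_mul_expIntegral_expPolyFun hA hτ,
    derivative_laguerre_zero, eval_zero_laguerre, hzero]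
  simp

theorem two_smul_sub_mul_matOrdLagCoef_succ (hA : ∀ μ ∈ spectrum ℂ A, μ.re < 0) (hτ : 0 < τ)
    (n : ℕ) :
    ((2 : ℂ) • A - (τ : ℂ) • 1) * matOrdLagCoef τ (n + 1) A =
      ((2 : ℂ) • A + (τ : ℂ) • 1) * matOrdLagCoef τ n A := by
  have h1 := A.two_smul_sub_mul_expIntegral_expPolyFun hA hτ (laguerre (n + 1))
  have h2 := A.two_smul_sub_mul_expIntegral_expPolyFun hA hτ (laguerre n)
  rw [derivative_laguerre_succ, expPolyFun_sub,
    Matrix.expIntegral_sub hA (integrableOn_expPolyFun hτ _) (integrableOn_expPolyFun hτ _),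
    ← matOrdLagCoef_eq_expIntegral, ← matOrdLagCoef_eq_expIntegral] at h1
  rw [← matOrdLagCoef_eq_expIntegral] at h2
  calc _ = ((2 : ℂ) • A - (τ : ℂ) • 1) * matOrdLagCoef τ n A +
        (2 * τ : ℂ) • matOrdLagCoef τ n A := by
        rw [h1, h2, eval_zero_laguerre, eval_zero_laguerre]
        module
    _ = _ := by
        simp only [sub_mul, add_mul, smul_mul_assoc, one_mul]
        module

end Recursion

theorem matOrdLagCoef_recursion (M : ℕ) (A : Matrix (Fin M) (Fin M) ℂ)
    (hA : ∀ μ ∈ spectrum ℂ A, μ.re < 0) (τ : ℝ) (hτ : 0 < τ) :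
    IsUnit ((2 : ℂ) • A - (τ : ℂ) • (1 : Matrix (Fin M) (Fin M) ℂ)) ∧
      matOrdLagCoef τ 0 A =
        (-2 * (Real.sqrt τ : ℂ)) •
          ((2 : ℂ) • A - (τ : ℂ) • (1 : Matrix (Fin M) (Fin M) ℂ))⁻¹ ∧
      ∀ n : ℕ, matOrdLagCoef τ (n + 1) A =
        ((2 : ℂ) • A + (τ : ℂ) • (1 : Matrix (Fin M) (Fin M) ℂ)) *
          ((2 : ℂ) • A - (τ : ℂ) • (1 : Matrix (Fin M) (Fin M) ℂ))⁻¹ *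
          matOrdLagCoef τ n A := by
  have hX := isUnit_two_smul_sub_smul_one hA hτ
  have hcomm : Commute ((2 : ℂ) • A - (τ : ℂ) • (1 : Matrix (Fin M) (Fin M) ℂ))
      ((2 : ℂ) • A + (τ : ℂ) • 1) :=
    ((Commute.refl A).smul_left _ |>.smul_right _ |>.add_right
      ((Commute.one_right A).smul_left _ |>.smul_right _)).sub_left
      ((Commute.one_left _).smul_left _)
  exact ⟨hX, Matrix.eq_smul_inv_of_mul_eq hX (two_smul_sub_mul_matOrdLagCoef_zero hA hτ),
    fun n => Matrix.eq_mul_inv_mul_of_mul_eq hX hcomm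
      (two_smul_sub_mul_matOrdLagCoef_succ hA hτ n)⟩
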